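/- With notation as in the previous lattice lemma, suppose additionally B/A = r/s with r, s nonzero integers. Then with M = n²s² + m²r², one has M·γ ∈ b·ℤ, and consequently w = u ∘ F is periodic: w(x + k·(Ma), y + ℓ·b) = w(x, y) for all integers k, ℓ. -/

import Mathlib

/-!
Write `b² = n²A² + m²B²`, which is positive because `(n, m)` is primitive. The rationality
relation `sB = rA` turns `Mγ` into an integer multiple of `b` and gives `M a = r s b`. Since
`b Ξ₀ = (nA, mB)` and `b Ξ₀ᗮ = (-mB, nA)`, the translation by `(k M a, l b)` is mapped by `F` to
`k r s (-mB, nA) + l (nA, mB) = ((l n - k m r²) A, (k n s² + l m) B)`, a vector of `Aℤ × Bℤ`.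
-/

theorem Int.ne_zero_or_ne_zero_of_mul_sub_mul_eq_one {n m p q : ℤ} (h : n * q - m * p = 1) :
    n ≠ 0 ∨ m ≠ 0 := by
  by_contra! ⟨rfl, rfl⟩
  simp at h

theorem int_sq_mul_add_sq_mul_pos {A B : ℝ} (hA : A ≠ 0) (hB : B ≠ 0) {n m : ℤ}
    (h : n ≠ 0 ∨ m ≠ 0) : 0 < (n : ℝ) ^ 2 * A ^ 2 + (m : ℝ) ^ 2 * B ^ 2 := by
  rcases h with hn | hm
  · have : (n : ℝ) ≠ 0 := Int.cast_ne_zero.mpr hn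
    positivity
  · have : (m : ℝ) ≠ 0 := Int.cast_ne_zero.mpr hm
    positivity

section RationalRatio

variable {A B b : ℝ} {n m r s : ℤ}
  (hsB : (s : ℝ) * B = r * A) (hb : b ^ 2 = (n : ℝ) ^ 2 * A ^ 2 + (m : ℝ) ^ 2 * B ^ 2)
include hsB hb

theorem M_mul_gamma_numerator_eq (p q : ℤ) :
    ((n ^ 2 * s ^ 2 + m ^ 2 * r ^ 2 : ℤ) : ℝ) * ((p : ℝ) * n * A ^ 2 + (q : ℝ) * m * B ^ 2) =
      ((p * n * s ^ 2 + q * m * r ^ 2 : ℤ) : ℝ) * b ^ 2 := by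
  push_cast
  linear_combination (-((p : ℝ) * n * s ^ 2 + q * m * r ^ 2)) * hb
    + ((q : ℝ) * m * n ^ 2 - p * n * m ^ 2) * ((s * B + r * A) * hsB)

theorem M_mul_AB_eq_rs_mul_sq :
    ((n ^ 2 * s ^ 2 + m ^ 2 * r ^ 2 : ℤ) : ℝ) * (A * B) = r * s * b ^ 2 := by
  push_cast
  linear_combination (-(r : ℝ) * s) * hb + ((n : ℝ) ^ 2 * s * A - (m : ℝ) ^ 2 * r * B) * hsB

end RationalRatio

/-- The paper's map `F`, `(x, y) ↦ x Ξ₀ᗮ + y Ξ₀`, for `Ξ₀ = (nA, mB) / b`. -/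
noncomputable def frameMap (A B : ℝ) (n m : ℤ) (b : ℝ) (z : ℝ × ℝ) : ℝ × ℝ :=
  z.1 • ((-(m * B)) / b, (n * A) / b) + z.2 • ((n * A) / b, (m * B) / b)

theorem frameMap_add_mul {b : ℝ} (hb : b ≠ 0) (A B : ℝ) (n m : ℤ) (x y c d : ℝ) :
    frameMap A B n m b (x + c * b, y + d * b) =
      frameMap A B n m b (x, y) + (d * n * A - c * m * B, c * n * A + d * m * B) := by
  simp only [frameMap, Prod.smul_mk, smul_eq_mul, Prod.mk_add_mk, Prod.mk.injEq]
  constructor <;> field_simp <;> ring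

theorem stmt6_general (A B : ℝ) (hA : A ≠ 0) (hB : B ≠ 0) (n m p q r s : ℤ)
    (hs : s ≠ 0) (hBez : n * q - m * p = 1)
    (hrat : B / A = (r : ℝ) / (s : ℝ)) :
    let b : ℝ := Real.sqrt ((n : ℝ)^2 * A^2 + (m : ℝ)^2 * B^2)
    let a : ℝ := A * B / b
    let γ : ℝ := -((p : ℝ) * n * A^2 + (q : ℝ) * m * B^2) / b
    let M : ℤ := n^2 * s^2 + m^2 * r^2
    let Xi0 : ℝ × ℝ := ((n * A) / b, (m * B) / b)
    let Xi0p : ℝ × ℝ := ((-(m * B)) / b, (n * A) / b)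
    let F : ℝ × ℝ → ℝ × ℝ := fun z => z.1 • Xi0p + z.2 • Xi0
    (∃ K : ℤ, (M : ℝ) * γ = (K : ℝ) * b) ∧
    (∀ u : ℝ × ℝ → ℂ,
        (∀ (z : ℝ × ℝ) (P Q : ℤ), u (z + ((P : ℝ) * A, (Q : ℝ) * B)) = u z) →
        ∀ (x y : ℝ) (k l : ℤ),
          (u ∘ F) (x + k * ((M : ℝ) * a), y + l * b) = (u ∘ F) (x, y)) := by
  intro b a γ M Xi0 Xi0p F
  have hpos := int_sq_mul_add_sq_mul_pos hA hB (Int.ne_zero_or_ne_zero_of_mul_sub_mul_eq_one hBez)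
  have hb0 : b ≠ 0 := (Real.sqrt_pos.mpr hpos).ne'
  have hb : b ^ 2 = (n : ℝ) ^ 2 * A ^ 2 + (m : ℝ) ^ 2 * B ^ 2 := Real.sq_sqrt hpos.le
  have hsB : (s : ℝ) * B = r * A := by
    linear_combination (div_eq_div_iff hA (Int.cast_ne_zero.mpr hs)).mp hrat
  have hMa : (M : ℝ) * a = (r * s : ℤ) * b := by
    simp only [a, mul_div_assoc', div_eq_iff hb0, mul_assoc, ← sq]
    push_cast
    exact M_mul_AB_eq_rs_mul_sq hsB hb
  refine ⟨⟨-(p * n * s ^ 2 + q * m * r ^ 2), ?_⟩, fun u hu x y k l => ?_⟩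
  · simp only [γ, M]
    rw [mul_div_assoc', div_eq_iff hb0, mul_neg, M_mul_gamma_numerator_eq hsB hb]
    push_cast
    ring
  · have hF : F (x + k * (M * a), y + l * b) =
        F (x, y) + (((l * n - k * m * r ^ 2 : ℤ) : ℝ) * A, ((k * n * s ^ 2 + l * m : ℤ) : ℝ) * B) := by
      rw [hMa, ← mul_assoc]
      refine (frameMap_add_mul hb0 A B n m x y _ _).trans (congrArg _ (Prod.ext ?_ ?_))
      · push_cast
        linear_combination (-(k : ℝ) * m * r) * hsB
      · push_cast
        linear_combination (-(k : ℝ) * n * s) * hsB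
    simp only [Function.comp_apply, hF, hu]

/-- In the rational case B/A = r/s, with M = n²s² + m²r² one has Mγ ∈ bℤ, hence
w = u ∘ F is genuinely periodic. -/
theorem stmt6 (A B : ℝ) (hA : A ≠ 0) (hB : B ≠ 0) (n m p q r s : ℤ)
    (hr : r ≠ 0) (hs : s ≠ 0) (hBez : n * q - m * p = 1)
    (hrat : B / A = (r : ℝ) / (s : ℝ)) :
    let b : ℝ := Real.sqrt ((n : ℝ)^2 * A^2 + (m : ℝ)^2 * B^2)
    let a : ℝ := A * B / b
    let γ : ℝ := -((p : ℝ) * n * A^2 + (q : ℝ) * m * B^2) / b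
    let M : ℤ := n^2 * s^2 + m^2 * r^2
    let Xi0 : ℝ × ℝ := ((n * A) / b, (m * B) / b)
    let Xi0p : ℝ × ℝ := ((-(m * B)) / b, (n * A) / b)
    let F : ℝ × ℝ → ℝ × ℝ := fun z => z.1 • Xi0p + z.2 • Xi0
    (∃ K : ℤ, (M : ℝ) * γ = (K : ℝ) * b) ∧
    (∀ u : ℝ × ℝ → ℂ,
        (∀ (z : ℝ × ℝ) (P Q : ℤ), u (z + ((P : ℝ) * A, (Q : ℝ) * B)) = u z) →
        ∀ (x y : ℝ) (k l : ℤ),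
          (u ∘ F) (x + k * ((M : ℝ) * a), y + l * b) = (u ∘ F) (x, y)) :=
  stmt6_general A B hA hB n m p q r s hs hBez hrat
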